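/- Fast escape of the Ornstein–Uhlenbeck process from a small window around 1: let Z¹ be the pathwise solution of Z¹_t = 1 − ∫_0^t Z¹_s ds + B_t, and for ε > 0 let τ₀ := inf{ t ≥ 0 : |Z¹_t − 1| = ε }. Then there exists α > 0 such that for all sufficiently small ε > 0, P(τ₀ > ε) ≤ exp(−ε^{−α}); in particular one may take α = 1/4. -/

import Mathlib

noncomputable section

open MeasureTheory ProbabilityTheory Set Filter Topology

namespace NeuronIF

/-- The discharge rate function `λ^δ`. -/
def lamδ (δ x : ℝ) : ℝ :=
  if x ≤ 1 then 0 else if x ≤ 1 + δ then (x - 1) / δ ^ 2 else 1 / δ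

/-- `B` is a standard Brownian motion (started at `0`) on the probability space `(Ω, P)`:
continuous paths, `B 0 = 0`, Gaussian increments and independent increments. -/
def IsStandardBM {Ω : Type*} [MeasurableSpace Ω] (P : Measure Ω) (B : ℝ → Ω → ℝ) : Prop :=
  (∀ ω, B 0 ω = 0) ∧
  (∀ ω, Continuous fun t => B t ω) ∧
  (∀ t, Measurable (B t)) ∧
  (∀ s t : ℝ, 0 ≤ s → s ≤ t →
    P.map (fun ω => B t ω - B s ω) = gaussianReal 0 (Real.toNNReal (t - s))) ∧
  (∀ (t : ℕ → ℝ), Monotone t → (∀ i, 0 ≤ t i) →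
    iIndepFun (fun i ω => B (t (i + 1)) ω - B (t i) ω) P)

/-- `X` is the integrate-and-fire process started from `x₀ < 1`, driven by the Brownian
motion `B`: between the successive reset times `T n`, it evolves as the Ornstein–Uhlenbeck
diffusion `dX = −X dt + √2 dB`; it reaches the threshold `1` exactly at the reset times
(as a left limit), where it is instantaneously reset to `0`. -/
structure IsIntegrateFire {Ω : Type*} [MeasurableSpace Ω] (P : Measure Ω)
    (B : ℝ → Ω → ℝ) (x₀ : ℝ) (X : ℝ → Ω → ℝ) (T : ℕ → Ω → ℝ) : Prop where
  bm : IsStandardBM P B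
  measX : ∀ t, Measurable (X t)
  measT : ∀ n, Measurable (T n)
  t_zero : ∀ ω, T 0 ω = 0
  t_mono : ∀ ω n, T n ω < T (n + 1) ω
  t_top : ∀ ω, Tendsto (fun n => T n ω) atTop atTop
  start : ∀ ω, X 0 ω = x₀
  reset : ∀ ω n, 1 ≤ n → X (T n ω) ω = 0
  below : ∀ ω n t, T n ω ≤ t → t < T (n + 1) ω → X t ω < 1
  cont : ∀ ω n, ContinuousOn (fun t => X t ω) (Ico (T n ω) (T (n + 1) ω))
  flow : ∀ ω n t, T n ω ≤ t → t < T (n + 1) ω →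
    X t ω = X (T n ω) ω - (∫ s in (T n ω)..t, X s ω) +
      Real.sqrt 2 * (B t ω - B (T n ω) ω)
  hit : ∀ ω n, Tendsto (fun t => X t ω)
    (nhdsWithin (T (n + 1) ω) (Iio (T (n + 1) ω))) (nhds 1)

/-- `X` is the regularized (random discharge) process with parameter `δ`, started from
`x₀ < 1` and driven by the Brownian motion `B`: between the successive jump times `T n`
it evolves as the Ornstein–Uhlenbeck diffusion `dX = −X dt + √2 dB`, and it jumps
instantaneously to `0` at the event times of a state-dependent Poisson process with
intensity `λ^δ(X_t)`, realized through the i.i.d. `Exp(1)` clocks `Γ n`, independent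
of `B`. -/
structure IsRegularizedIF {Ω : Type*} [MeasurableSpace Ω] (δ : ℝ) (P : Measure Ω)
    (B : ℝ → Ω → ℝ) (Γ : ℕ → Ω → ℝ) (x₀ : ℝ) (X : ℝ → Ω → ℝ) (T : ℕ → Ω → ℝ) : Prop where
  bm : IsStandardBM P B
  measX : ∀ t, Measurable (X t)
  measT : ∀ n, Measurable (T n)
  measΓ : ∀ n, Measurable (Γ n)
  clock_law : ∀ n, P.map (Γ n) = expMeasure 1
  clock_iid : iIndepFun Γ P
  clock_indep_bm : IndepFun (fun ω => fun n => Γ n ω) (fun ω => fun t => B t ω) P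
  t_zero : ∀ ω, T 0 ω = 0
  t_mono : ∀ ω n, T n ω < T (n + 1) ω
  t_top : ∀ ω, Tendsto (fun n => T n ω) atTop atTop
  start : ∀ ω, X 0 ω = x₀
  reset : ∀ ω n, 1 ≤ n → X (T n ω) ω = 0
  cont : ∀ ω n, ContinuousOn (fun t => X t ω) (Ico (T n ω) (T (n + 1) ω))
  flow : ∀ ω n t, T n ω ≤ t → t < T (n + 1) ω →
    X t ω = X (T n ω) ω - (∫ s in (T n ω)..t, X s ω) +
      Real.sqrt 2 * (B t ω - B (T n ω) ω)
  clock_eq : ∀ ω n, (∫ s in (T n ω)..(T (n + 1) ω), lamδ δ (X s ω)) = Γ (n + 1) ω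
  clock_min : ∀ ω n u, T n ω ≤ u → u < T (n + 1) ω →
    (∫ s in (T n ω)..u, lamδ δ (X s ω)) < Γ (n + 1) ω


/-!
On the event `τ₀ > ε` the path never leaves the window, `|Z¹_t − 1| < ε` on `[0, ε]`, and the
integral equation then confines the Brownian path too: `|B_t| ≤ ε + (1 + ε) t ≤ 3ε` there.
Cutting `[0, ε]` into `n = ⌈ε^{-1/4}⌉` steps of length `ε/n`, the `n` independent Gaussian
increments of `B` must all lie in `[-6ε, 6ε]`. Each does so with probability at most
`12ε / √(2π ε/n) = O(ε^{3/8}) ≤ e⁻¹`, so the event has probability at most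
`e^{-n} ≤ exp(-ε^{-1/4})`.
-/

section

open Real
open scoped NNReal

lemma gaussianPDFReal_le (μ : ℝ) (v : ℝ≥0) (x : ℝ) :
    gaussianPDFReal μ v x ≤ (√(2 * π * v))⁻¹ := by
  rw [gaussianPDFReal]
  refine mul_le_of_le_one_right (by positivity) (Real.exp_le_one_iff.2 ?_)
  exact div_nonpos_of_nonpos_of_nonneg (neg_nonpos.2 (sq_nonneg _)) (by positivity)

lemma gaussianReal_Icc_le (μ : ℝ) {v : ℝ≥0} (hv : v ≠ 0) {a b : ℝ} (hab : a ≤ b) :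
    gaussianReal μ v (Icc a b) ≤ ENNReal.ofReal ((b - a) / √(2 * π * v)) := by
  rw [gaussianReal_apply_eq_integral μ hv]
  refine ENNReal.ofReal_le_ofReal ?_
  calc ∫ x in Icc a b, gaussianPDFReal μ v x ≤ ∫ _ in Icc a b, (√(2 * π * v))⁻¹ :=
        setIntegral_mono_on (integrable_gaussianPDFReal μ v).integrableOn
          (integrableOn_const measure_Icc_lt_top.ne) measurableSet_Icc
          fun x _ => gaussianPDFReal_le μ v x
    _ = (b - a) / √(2 * π * v) := by
      rw [setIntegral_const, smul_eq_mul, Real.volume_real_Icc_of_le hab, div_eq_mul_inv]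

lemma IsStandardBM.measure_forall_abs_increment_le {Ω : Type*} [MeasurableSpace Ω]
    {P : Measure Ω} {B : ℝ → Ω → ℝ} (hB : IsStandardBM P B) {h : ℝ} (hh : 0 < h)
    {a : ℝ} (ha : 0 ≤ a) (n : ℕ) :
    P {ω | ∀ i < n, |B ((i + 1) * h) ω - B (i * h) ω| ≤ a}
      ≤ ENNReal.ofReal (2 * a / √(2 * π * h)) ^ n := by
  obtain ⟨-, -, hmeas, hlaw, hindep⟩ := hB
  set g : ℕ → ℝ := fun i => i * h
  have hg : Monotone g := fun i j hij => by simp only [g]; gcongr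
  have hevent : {ω | ∀ i < n, |B ((i + 1) * h) ω - B (i * h) ω| ≤ a}
      = ⋂ i ∈ Finset.range n, (fun ω => B (g (i + 1)) ω - B (g i) ω) ⁻¹' Icc (-a) a := by
    ext ω
    simp [g, abs_le]
  have hfactor : ∀ i, P ((fun ω => B (g (i + 1)) ω - B (g i) ω) ⁻¹' Icc (-a) a)
      ≤ ENNReal.ofReal (2 * a / √(2 * π * h)) := by
    intro i
    have hstep : g (i + 1) - g i = h := by simp only [g]; push_cast; ring
    rw [← Measure.map_apply (f := fun ω => B (g (i + 1)) ω - B (g i) ω)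
      ((hmeas _).sub (hmeas _)) measurableSet_Icc,
      hlaw _ _ (by positivity) (hg i.le_succ), hstep]
    have := gaussianReal_Icc_le 0 (v := h.toNNReal) (by simpa using hh) (neg_le_self ha)
    rwa [Real.coe_toNNReal _ hh.le, sub_neg_eq_add, ← two_mul] at this
  rw [hevent, (hindep g hg fun i => by positivity).meas_biInter
    fun i _ => ⟨Icc (-a) a, measurableSet_Icc, rfl⟩]
  refine (Finset.prod_le_prod' fun i _ => hfactor i).trans_eq ?_
  rw [Finset.prod_const, Finset.card_range]

lemma ContinuousOn.forall_lt_of_forall_ne {f : ℝ → ℝ} {a b c : ℝ}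
    (hf : ContinuousOn f (Icc a b)) (ha : f a < c) (hne : ∀ t ∈ Icc a b, f t ≠ c) :
    ∀ t ∈ Icc a b, f t < c := by
  intro t ht
  by_contra! hle
  obtain ⟨s, hs, hfs⟩ :=
    intermediate_value_Icc ht.1 (hf.mono (Icc_subset_Icc_right ht.2)) ⟨ha.le, hle⟩
  exact hne s ⟨hs.1, hs.2.trans ht.2⟩ hfs

lemma abs_le_of_eq_sub_integral_add {z b : ℝ → ℝ} {x₀ ε T : ℝ}
    (hzb : ∀ t ∈ Icc 0 T, z t = x₀ - (∫ s in (0 : ℝ)..t, z s) + b t)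
    (hz : ∀ t ∈ Icc 0 T, |z t - x₀| ≤ ε) :
    ∀ t ∈ Icc 0 T, |b t| ≤ ε + (|x₀| + ε) * t := by
  intro t ht
  have hint : |∫ s in (0 : ℝ)..t, z s| ≤ (|x₀| + ε) * t := by
    have := intervalIntegral.norm_integral_le_of_norm_le_const (a := 0) (b := t)
      (C := |x₀| + ε) (f := z) fun s hs => ?_
    · simpa [abs_of_nonneg ht.1] using this
    rw [uIoc_of_le ht.1] at hs
    calc ‖z s‖ = |x₀ + (z s - x₀)| := by rw [Real.norm_eq_abs, add_sub_cancel]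
      _ ≤ |x₀| + |z s - x₀| := abs_add_le _ _
      _ ≤ |x₀| + ε := by gcongr; exact hz s ⟨hs.1.le, hs.2.trans ht.2⟩
  calc |b t| = |(z t - x₀) + ∫ s in (0 : ℝ)..t, z s| := by rw [hzb t ht]; ring_nf
    _ ≤ |z t - x₀| + |∫ s in (0 : ℝ)..t, z s| := abs_add_le _ _
    _ ≤ ε + (|x₀| + ε) * t := add_le_add (hz t ht) hint

lemma abs_sub_le_of_forall_abs_sub_one_ne {z b : ℝ → ℝ} {ε : ℝ} (hε : 0 < ε) (hε1 : ε ≤ 1)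
    (hz : Continuous z) (hb : b 0 = 0)
    (hzb : ∀ t, 0 ≤ t → z t = 1 - (∫ s in (0 : ℝ)..t, z s) + b t)
    (hne : ∀ t ∈ Icc 0 ε, |z t - 1| ≠ ε) {s t : ℝ} (hs : s ∈ Icc 0 ε) (ht : t ∈ Icc 0 ε) :
    |b t - b s| ≤ 6 * ε := by
  have hz0 : z 0 = 1 := by simpa [hb] using hzb 0 le_rfl
  have hwindow : ∀ u ∈ Icc 0 ε, |z u - 1| < ε :=
    ContinuousOn.forall_lt_of_forall_ne (hz.sub continuous_const).abs.continuousOn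
      (by simpa [hz0]) hne
  have hbound : ∀ u ∈ Icc 0 ε, |b u| ≤ 3 * ε := fun u hu => by
    have := abs_le_of_eq_sub_integral_add (fun u hu => hzb u hu.1)
      (fun u hu => (hwindow u hu).le) u hu
    rw [abs_one] at this
    nlinarith [hu.2]
  calc |b t - b s| ≤ |b t| + |b s| := abs_sub _ _
    _ ≤ 6 * ε := by linarith [hbound t ht, hbound s hs]

lemma two_mul_six_mul_div_sqrt_le_exp_neg_one {ε : ℝ} (hε : 0 < ε) {n : ℕ} (hn : 0 < n)
    (h : 1296 * ε * n ≤ 1) :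
    2 * (6 * ε) / √(2 * π * (ε / n)) ≤ Real.exp (-1) := by
  have hn' : (0 : ℝ) < n := by exact_mod_cast hn
  have hroot : 36 * ε ≤ √(2 * π * (ε / n)) := by
    refine Real.le_sqrt_of_sq_le ?_
    rw [mul_div_assoc', le_div_iff₀ hn']
    nlinarith [Real.pi_gt_three]
  calc 2 * (6 * ε) / √(2 * π * (ε / n)) ≤ 2 * (6 * ε) / (36 * ε) := by gcongr
    _ = 1 / 3 := by field_simp; norm_num
    _ ≤ Real.exp (-1) := by linarith [Real.exp_neg_one_gt_d9]

lemma rpow_neg_quarter_pow_four_mul_self {ε : ℝ} (hε : 0 < ε) :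
    (ε ^ (-(1 / 4) : ℝ)) ^ 4 * ε = 1 := by
  rw [← Real.rpow_natCast, ← Real.rpow_mul hε.le]
  norm_num [Real.rpow_neg_one, hε.ne']

lemma mul_ceil_rpow_neg_quarter_le {ε : ℝ} (hε : 0 < ε) (hε₀ : ε < 1 / 10 ^ 8) :
    1296 * ε * ⌈ε ^ (-(1 / 4) : ℝ)⌉₊ ≤ 1 := by
  set r := ε ^ (-(1 / 4) : ℝ)
  have hr4 : r ^ 4 * ε = 1 := rpow_neg_quarter_pow_four_mul_self hε
  have hr : 100 ≤ r := by
    by_contra! hr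
    have : r ^ 4 ≤ 100 ^ 4 := pow_le_pow_left₀ (by positivity) hr.le 4
    nlinarith
  have hεr : ε * r ≤ 1 / 10 ^ 6 := by
    have hr3 : 100 ^ 3 ≤ r ^ 3 := pow_le_pow_left₀ (by norm_num) hr 3
    have : ε * r * r ^ 3 = 1 := by rw [← hr4]; ring
    nlinarith
  have hceil : (⌈r⌉₊ : ℝ) < r + 1 := Nat.ceil_lt_add_one (by positivity)
  nlinarith

end

theorem fast_escape_OU_window_general
    {Ω : Type*} [MeasurableSpace Ω] (P : Measure Ω)
    (B : ℝ → Ω → ℝ) (hB : IsStandardBM P B)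
    (Z : ℝ → Ω → ℝ)
    (hZcont : ∀ ω, Continuous fun t => Z t ω)
    (hZ : ∀ ω, ∀ t : ℝ, 0 ≤ t → Z t ω = 1 - (∫ s in (0 : ℝ)..t, Z s ω) + B t ω) :
    ∃ α : ℝ, 0 < α ∧ α = 1 / 4 ∧ ∃ ε₀ : ℝ, 0 < ε₀ ∧
      ∀ ε : ℝ, 0 < ε → ε < ε₀ →
        P {ω | ∀ t ∈ Set.Icc (0 : ℝ) ε, |Z t ω - 1| ≠ ε}
          ≤ ENNReal.ofReal (Real.exp (-(ε ^ (-α)))) := by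
  refine ⟨1 / 4, by norm_num, rfl, 1 / 10 ^ 8, by norm_num, fun ε hε hε₀ => ?_⟩
  set n := ⌈ε ^ (-(1 / 4) : ℝ)⌉₊
  have hn : 0 < n := Nat.ceil_pos.2 (by positivity)
  have hgrid : ∀ i ≤ n, (i : ℝ) * (ε / n) ∈ Icc 0 ε := fun i hi => by
    refine ⟨by positivity, ?_⟩
    calc (i : ℝ) * (ε / n) ≤ n * (ε / n) := by gcongr
      _ = ε := mul_div_cancel₀ ε (by positivity)
  have hconfined : {ω | ∀ t ∈ Icc (0 : ℝ) ε, |Z t ω - 1| ≠ ε}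
      ⊆ {ω | ∀ i < n, |B ((i + 1) * (ε / n)) ω - B (i * (ε / n)) ω| ≤ 6 * ε} :=
    fun ω hω i hi => abs_sub_le_of_forall_abs_sub_one_ne hε (by linarith) (hZcont ω)
      (hB.1 ω) (hZ ω) hω (hgrid i hi.le) (by exact_mod_cast hgrid (i + 1) hi)
  calc P {ω | ∀ t ∈ Icc (0 : ℝ) ε, |Z t ω - 1| ≠ ε}
      ≤ ENNReal.ofReal (2 * (6 * ε) / √(2 * Real.pi * (ε / n))) ^ n :=
        (measure_mono hconfined).trans
          (hB.measure_forall_abs_increment_le (by positivity) (by positivity) n)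
    _ ≤ ENNReal.ofReal (Real.exp (-1)) ^ n := by
        gcongr
        exact two_mul_six_mul_div_sqrt_le_exp_neg_one hε hn
          (mul_ceil_rpow_neg_quarter_le hε hε₀)
    _ = ENNReal.ofReal (Real.exp (-n)) := by
        rw [← ENNReal.ofReal_pow (Real.exp_pos _).le, ← Real.exp_nat_mul, mul_neg_one]
    _ ≤ ENNReal.ofReal (Real.exp (-(ε ^ (-(1 / 4) : ℝ)))) := by
        gcongr
        exact Nat.le_ceil _

/-- **Fast escape of the OU process from a small window around 1.**
Let `Z¹` be the pathwise solution of `Z¹_t = 1 − ∫_0^t Z¹_s ds + B_t`, and for `ε > 0`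
let `τ₀ = inf{t ≥ 0 : |Z¹_t − 1| = ε}`.  Then there exists `α > 0` such that for all
sufficiently small `ε > 0`, `P(τ₀ > ε) ≤ exp(−ε^{−α})`; in particular one may take
`α = 1/4`.  (For the continuous path `Z¹` with `Z¹_0 = 1`, the event `τ₀ > ε` is
exactly that `|Z¹_t − 1| ≠ ε` for every `t ∈ [0, ε]`, which is how it is written.) -/
theorem fast_escape_OU_window
    {Ω : Type*} [MeasurableSpace Ω] (P : Measure Ω) [IsProbabilityMeasure P]
    (B : ℝ → Ω → ℝ) (hB : IsStandardBM P B)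
    (Z : ℝ → Ω → ℝ)
    (hZcont : ∀ ω, Continuous fun t => Z t ω)
    (hZmeas : ∀ t, Measurable (Z t))
    (hZ : ∀ ω, ∀ t : ℝ, 0 ≤ t → Z t ω = 1 - (∫ s in (0 : ℝ)..t, Z s ω) + B t ω) :
    ∃ α : ℝ, 0 < α ∧ α = 1 / 4 ∧ ∃ ε₀ : ℝ, 0 < ε₀ ∧
      ∀ ε : ℝ, 0 < ε → ε < ε₀ →
        P {ω | ∀ t ∈ Set.Icc (0 : ℝ) ε, |Z t ω - 1| ≠ ε}
          ≤ ENNReal.ofReal (Real.exp (-(ε ^ (-α)))) :=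
  fast_escape_OU_window_general P B hB Z hZcont hZ

end NeuronIF
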